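/- arXiv:math/0602410 — 7 statements merged into one kernel-verified Lean document; each statement's English description precedes it below -/
import Mathlib

section
/- Let m ≥ 2 be an integer and define u : (0,∞) → ℝ by u(r) = (∫₀^r (sinh t)^(m-1) dt) / (sinh r)^(m-1). Then for every r > 0 one has 0 < u(r) < 1/(m−1). -/
/-!
Since `sinh < cosh`, the integral of `sinh t ^ (n + 1)` over `[0, r]` is strictly smaller than
that of `sinh t ^ n * cosh t`, which is the derivative of `sinh t ^ (n + 1) / (n + 1)`.
With `n = m - 2` this gives `u r < 1 / (m - 1)`.
-/

open Real intervalIntegral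

lemma integral_sinh_pow_mul_cosh (n : ℕ) (r : ℝ) :
    ∫ t in (0:ℝ)..r, sinh t ^ n * cosh t = sinh r ^ (n + 1) / (n + 1) := by
  have hderiv : ∀ t ∈ Set.uIcc (0:ℝ) r,
      HasDerivAt (fun s ↦ sinh s ^ (n + 1) / (n + 1)) (sinh t ^ n * cosh t) t := by
    intro t _
    refine (((hasDerivAt_sinh t).fun_pow (n + 1)).div_const ((n : ℝ) + 1)).congr_deriv ?_
    push_cast
    field_simp
  rw [integral_eq_sub_of_hasDerivAt hderiv
    (((continuous_sinh.pow n).mul continuous_cosh).intervalIntegrable 0 r)]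
  simp

lemma integral_sinh_pow_pos (n : ℕ) {r : ℝ} (hr : 0 < r) :
    0 < ∫ t in (0:ℝ)..r, sinh t ^ n :=
  intervalIntegral_pos_of_pos_on ((continuous_sinh.pow n).intervalIntegrable 0 r)
    (fun _ hx ↦ pow_pos (sinh_pos_iff.mpr hx.1) n) hr

lemma sinh_pow_succ_lt_sinh_pow_mul_cosh (n : ℕ) {x : ℝ} (hx : 0 < x) :
    sinh x ^ (n + 1) < sinh x ^ n * cosh x := by
  rw [pow_succ]
  exact mul_lt_mul_of_pos_left (sinh_lt_cosh x) (pow_pos (sinh_pos_iff.mpr hx) n)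

lemma integral_sinh_pow_succ_lt (n : ℕ) {r : ℝ} (hr : 0 < r) :
    ∫ t in (0:ℝ)..r, sinh t ^ (n + 1) < sinh r ^ (n + 1) / (n + 1) := by
  rw [← integral_sinh_pow_mul_cosh]
  refine integral_lt_integral_of_continuousOn_of_le_of_exists_lt hr
    (continuous_sinh.pow _).continuousOn
    ((continuous_sinh.pow n).mul continuous_cosh).continuousOn
    (fun x hx ↦ (sinh_pow_succ_lt_sinh_pow_mul_cosh n hx.1).le)
    ⟨r, Set.right_mem_Icc.mpr hr.le, sinh_pow_succ_lt_sinh_pow_mul_cosh n hr⟩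

/-- For an integer `m ≥ 2` and
`u r = (∫₀^r (sinh t)^(m-1) dt) / (sinh r)^(m-1)`, one has `0 < u r < 1/(m-1)`
for every `r > 0`. -/
theorem stmt_2 (m : ℕ) (hm : 2 ≤ m) (u : ℝ → ℝ)
    (hu : ∀ r : ℝ, u r =
      (∫ t in (0:ℝ)..r, Real.sinh t ^ (m - 1)) / Real.sinh r ^ (m - 1)) :
    ∀ r : ℝ, 0 < r → 0 < u r ∧ u r < 1 / ((m : ℝ) - 1) := by
  obtain ⟨n, rfl⟩ : ∃ n, m = n + 2 := ⟨m - 2, by omega⟩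
  intro r hr
  have hsinh : 0 < sinh r ^ (n + 1) := pow_pos (sinh_pos_iff.mpr hr) _
  have hm1 : ((n + 2 : ℕ) : ℝ) - 1 = n + 1 := by push_cast; ring
  rw [hu, show n + 2 - 1 = n + 1 from rfl, hm1]
  refine ⟨div_pos (integral_sinh_pow_pos _ hr) hsinh, ?_⟩
  rw [div_lt_iff₀ hsinh, one_div_mul_eq_div]
  exact integral_sinh_pow_succ_lt n hr
end

section
/- Let m ≥ 2 be an integer and define u : (0,∞) → ℝ by u(r) = (∫₀^r (sinh t)^(m-1) dt) / (sinh r)^(m-1). Then u(r) tends to 1/(m−1) as r → +∞, and consequently the supremum of u over (0,∞) equals 1/(m−1) and is not attained. -/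
open Filter Topology

private lemma key_identity (n : ℕ) (hn : 1 ≤ n) (r : ℝ) :
    Real.sinh r ^ n / n - (∫ t in (0:ℝ)..r, Real.sinh t ^ n)
      = ∫ t in (0:ℝ)..r, Real.sinh t ^ (n-1) * Real.exp (-t) := by
  have h1 := intervalIntegral.integral_eq_sub_of_hasDerivAt
    (f := fun x => Real.sinh x ^ n)
    (f' := fun t => (n:ℝ) * Real.sinh t ^ (n-1) * Real.cosh t)
    (fun t _ => (Real.hasDerivAt_sinh t).pow n)
    ((Continuous.intervalIntegrable (by continuity) 0 r))
  simp only [Real.sinh_zero, zero_pow (by omega : n ≠ 0), sub_zero] at h1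
  have h2 : ∫ t in (0:ℝ)..r, Real.sinh t ^ (n-1) * Real.cosh t = Real.sinh r ^ n / n := by
    have hn0 : (n:ℝ) ≠ 0 := by positivity
    rw [eq_div_iff hn0, ← h1, mul_comm, ← intervalIntegral.integral_const_mul]
    congr 1; ext t; ring
  have h3 : ∀ t : ℝ, Real.sinh t ^ (n-1) * Real.exp (-t)
      = Real.sinh t ^ (n-1) * Real.cosh t - Real.sinh t ^ n := by
    intro t
    rw [← Real.cosh_sub_sinh]
    have : Real.sinh t ^ n = Real.sinh t ^ (n-1) * Real.sinh t := by
      rw [← pow_succ]; congr 1; omega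
    rw [this]; ring
  rw [intervalIntegral.integral_congr
      (g := fun t => Real.sinh t ^ (n-1) * Real.cosh t - Real.sinh t ^ n) (fun t _ => h3 t),
    intervalIntegral.integral_sub (Continuous.intervalIntegrable (by continuity) 0 r)
      (Continuous.intervalIntegrable (by continuity) 0 r), h2]

/-- For an integer `m ≥ 2` and
`u r = (∫₀^r (sinh t)^(m-1) dt) / (sinh r)^(m-1)`, `u r` tends to `1/(m-1)` as
`r → +∞`; consequently `1/(m-1)` is the least upper bound of `u` on `(0,∞)` and
it is not attained. -/
theorem stmt_3 (m : ℕ) (hm : 2 ≤ m) (u : ℝ → ℝ)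
    (hu : ∀ r : ℝ, u r =
      (∫ t in (0:ℝ)..r, Real.sinh t ^ (m - 1)) / Real.sinh r ^ (m - 1)) :
    Tendsto u atTop (𝓝 (1 / ((m : ℝ) - 1))) ∧
      IsLUB (u '' Set.Ioi 0) (1 / ((m : ℝ) - 1)) ∧
      (1 / ((m : ℝ) - 1)) ∉ u '' Set.Ioi 0 := by
  set n := m - 1 with hndef
  have hn : 1 ≤ n := by omega
  have hcast : (m : ℝ) - 1 = (n : ℝ) := by
    have : m = n + 1 := by omega
    rw [this]; push_cast; ring
  rw [hcast]
  set G : ℝ → ℝ := fun r => ∫ t in (0:ℝ)..r, Real.sinh t ^ (n-1) * Real.exp (-t) with hGdef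
  -- u r expressed via G
  have hur : ∀ r : ℝ, 0 < r → u r = 1 / (n:ℝ) - G r / Real.sinh r ^ n := by
    intro r hr
    have hs : (0:ℝ) < Real.sinh r := Real.sinh_pos_iff.2 hr
    have hsn : (0:ℝ) < Real.sinh r ^ n := pow_pos hs n
    have hF : (∫ t in (0:ℝ)..r, Real.sinh t ^ n) = Real.sinh r ^ n / n - G r := by
      have := key_identity n hn r
      linarith [this]
    rw [hu r, hF]
    field_simp
  -- positivity of G on (0,∞)
  have hGpos : ∀ r : ℝ, 0 < r → 0 < G r := by
    intro r hr
    apply intervalIntegral.intervalIntegral_pos_of_pos_on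
      (Continuous.intervalIntegrable (by continuity) 0 r)
    · intro x hx
      exact mul_pos (pow_pos (Real.sinh_pos_iff.2 hx.1) _) (Real.exp_pos _)
    · exact hr
  -- bound G r ≤ r * sinh r ^ (n-1)
  have hGle : ∀ r : ℝ, 0 ≤ r → G r ≤ r * Real.sinh r ^ (n-1) := by
    intro r hr
    have : G r ≤ ∫ _ in (0:ℝ)..r, Real.sinh r ^ (n-1) := by
      apply intervalIntegral.integral_mono_on hr
        (Continuous.intervalIntegrable (by continuity) 0 r)
        (intervalIntegrable_const)
      intro t ht
      have h0 : 0 ≤ Real.sinh t := Real.sinh_nonneg_iff.2 ht.1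
      have h1 : Real.sinh t ≤ Real.sinh r := Real.sinh_le_sinh.2 ht.2
      have h2 : Real.sinh t ^ (n-1) ≤ Real.sinh r ^ (n-1) := pow_le_pow_left₀ h0 h1 _
      have h3 : Real.exp (-t) ≤ 1 := Real.exp_le_one_iff.2 (by linarith [ht.1])
      calc Real.sinh t ^ (n-1) * Real.exp (-t) ≤ Real.sinh t ^ (n-1) * 1 :=
            mul_le_mul_of_nonneg_left h3 (pow_nonneg h0 _)
        _ = Real.sinh t ^ (n-1) := mul_one _
        _ ≤ Real.sinh r ^ (n-1) := h2
    simpa using this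
  -- r / sinh r → 0
  have hrs : Tendsto (fun r : ℝ => r / Real.sinh r) atTop (𝓝 0) := by
    have hb : Tendsto (fun r : ℝ => 4 * (r * Real.exp (-r))) atTop (𝓝 0) := by
      have := Real.tendsto_pow_mul_exp_neg_atTop_nhds_zero 1
      simp only [pow_one] at this
      simpa using this.const_mul 4
    apply squeeze_zero' ?_ ?_ hb
    · filter_upwards [eventually_gt_atTop (0:ℝ)] with r hr
      positivity
    · filter_upwards [eventually_ge_atTop (1:ℝ)] with r hr
      have hr0 : (0:ℝ) < r := by linarith
      have hexp : (2:ℝ) ≤ Real.exp r := by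
        calc (2:ℝ) ≤ Real.exp 1 := by
              have := Real.add_one_le_exp (1:ℝ); linarith
          _ ≤ Real.exp r := Real.exp_le_exp.2 hr
      have hsinh : Real.exp r / 4 ≤ Real.sinh r := by
        rw [Real.sinh_eq]
        have he : Real.exp (-r) ≤ 1 := Real.exp_le_one_iff.2 (by linarith)
        nlinarith [Real.exp_pos r]
      have hs : (0:ℝ) < Real.sinh r := Real.sinh_pos_iff.2 hr0
      rw [div_le_iff₀ hs]
      have : Real.exp (-r) = 1 / Real.exp r := by
        rw [Real.exp_neg]; ring
      rw [this]
      have hE : (0:ℝ) < Real.exp r := Real.exp_pos r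
      calc r = 4 * (r * (1/Real.exp r)) * (Real.exp r / 4) := by
            field_simp
        _ ≤ 4 * (r * (1/Real.exp r)) * Real.sinh r := by
            apply mul_le_mul_of_nonneg_left hsinh
            positivity
  -- G r / sinh r ^ n → 0
  have hsq : Tendsto (fun r : ℝ => G r / Real.sinh r ^ n) atTop (𝓝 0) := by
    apply squeeze_zero' ?_ ?_ hrs
    · filter_upwards [eventually_gt_atTop (0:ℝ)] with r hr
      exact div_nonneg (hGpos r hr).le (pow_nonneg (Real.sinh_nonneg_iff.2 hr.le) n)
    · filter_upwards [eventually_gt_atTop (0:ℝ)] with r hr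
      have hs : (0:ℝ) < Real.sinh r := Real.sinh_pos_iff.2 hr
      have hsn1 : (0:ℝ) < Real.sinh r ^ (n-1) := pow_pos hs _
      have hpow : Real.sinh r ^ n = Real.sinh r ^ (n-1) * Real.sinh r := by
        rw [← pow_succ]; congr 1; omega
      rw [hpow, div_le_div_iff₀ (by positivity) hs]
      calc G r * Real.sinh r ≤ (r * Real.sinh r ^ (n-1)) * Real.sinh r :=
            mul_le_mul_of_nonneg_right (hGle r hr.le) hs.le
        _ = r * (Real.sinh r ^ (n-1) * Real.sinh r) := by ring
  have htend : Tendsto u atTop (𝓝 (1 / (n:ℝ))) := by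
    have h1 : Tendsto (fun r : ℝ => 1/(n:ℝ) - G r / Real.sinh r ^ n) atTop (𝓝 (1/(n:ℝ))) := by
      simpa using tendsto_const_nhds.sub hsq
    apply h1.congr'
    filter_upwards [eventually_gt_atTop (0:ℝ)] with r hr
    exact (hur r hr).symm
  have hlt : ∀ r : ℝ, 0 < r → u r < 1 / (n:ℝ) := by
    intro r hr
    rw [hur r hr]
    have hsn : (0:ℝ) < Real.sinh r ^ n := pow_pos (Real.sinh_pos_iff.2 hr) n
    have : 0 < G r / Real.sinh r ^ n := div_pos (hGpos r hr) hsn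
    linarith
  refine ⟨htend, ⟨?_, ?_⟩, ?_⟩
  · rintro x ⟨r, hr, rfl⟩
    exact (hlt r hr).le
  · intro b hb
    apply le_of_tendsto htend
    filter_upwards [eventually_gt_atTop (0:ℝ)] with r hr
    exact hb ⟨r, hr, rfl⟩
  · rintro ⟨r, hr, heq⟩
    exact absurd heq (ne_of_lt (hlt r hr))
end

section
/- Let m ≥ 2 be an integer, c a real constant, and w : (0,∞) → ℝ a differentiable function. Define u : (0,∞) → ℝ by u(r) = w(r)/√(1 + w(r)²). Then w satisfies w'(r) = c·(1 + w(r)²)^(3/2) − (m−1)·coth(r)·w(r)·(1 + w(r)²) for all r > 0 if and only if u is differentiable and satisfies u'(r) = c − (m−1)·coth(r)·u(r) for all r > 0. -/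
/-!
With `A = 1 + w²`, the quotient rule gives `(w / √A)' = w' / A^{3/2}`, so `u' = w' / A^{3/2}`.
Multiplying the linear equation `u' = c - (m-1) coth r · u` by `A^{3/2} = √A · A` turns it
into the nonlinear one, since `u · A^{3/2} = w · A`.
-/

open Real

lemma Real.rpow_three_halves {a : ℝ} (ha : 0 < a) : a ^ ((3 : ℝ) / 2) = √a * a := by
  rw [show (3 : ℝ) / 2 = 1 / 2 + 1 by norm_num, rpow_add ha, rpow_one, ← sqrt_eq_rpow]

lemma HasDerivAt.div_sqrt_one_add_sq {f : ℝ → ℝ} {f' x : ℝ} (hf : HasDerivAt f f' x) :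
    HasDerivAt (fun y => f y / √(1 + f y ^ 2)) (f' / (1 + f x ^ 2) ^ ((3 : ℝ) / 2)) x := by
  have hA : 0 < 1 + f x ^ 2 := by positivity
  have hsqrt : HasDerivAt (fun y => √(1 + f y ^ 2))
      (1 / (2 * √(1 + f x ^ 2)) * ((2 : ℕ) * f x ^ 1 * f')) x :=
    (hasDerivAt_sqrt hA.ne').comp x ((hf.pow 2).const_add 1)
  refine (hf.div hsqrt (sqrt_pos.2 hA).ne').congr_deriv ?_
  rw [rpow_three_halves hA]
  field_simp
  rw [sq_sqrt hA.le]
  push_cast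
  ring

lemma mul_sub_div_sqrt_mul_rpow_three_halves {A : ℝ} (hA : 0 < A) (c k w : ℝ) :
    (c - k * (w / √A)) * A ^ ((3 : ℝ) / 2) = c * A ^ ((3 : ℝ) / 2) - k * w * A := by
  have hs : √A ≠ 0 := (sqrt_pos.2 hA).ne'
  rw [rpow_three_halves hA]
  field_simp

theorem stmt_6_general (m : ℕ) (c : ℝ) (w : ℝ → ℝ)
    (hw : ∀ r : ℝ, 0 < r → DifferentiableAt ℝ w r)
    (u : ℝ → ℝ) (hu : ∀ r : ℝ, u r = w r / Real.sqrt (1 + w r ^ 2)) :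
    (∀ r : ℝ, 0 < r →
        deriv w r = c * (1 + w r ^ 2) ^ ((3:ℝ)/2)
          - ((m : ℝ) - 1) * (Real.cosh r / Real.sinh r) * w r * (1 + w r ^ 2)) ↔
      (∀ r : ℝ, 0 < r →
        HasDerivAt u (c - ((m : ℝ) - 1) * (Real.cosh r / Real.sinh r) * u r) r) := by
  refine forall₂_congr fun r hr => ?_
  have hA : 0 < 1 + w r ^ 2 := by positivity
  have hu' : HasDerivAt u (deriv w r / (1 + w r ^ 2) ^ ((3 : ℝ) / 2)) r := by
    simpa only [← funext hu] using (hw r hr).hasDerivAt.div_sqrt_one_add_sq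
  rw [← mul_sub_div_sqrt_mul_rpow_three_halves hA, ← hu r,
    ← div_eq_iff (rpow_pos_of_pos hA _).ne']
  exact ⟨fun h => h ▸ hu', hu'.unique⟩

/-- For `m ≥ 2`, `c ∈ ℝ` and a function `w` differentiable on `(0,∞)`, setting
`u = w/√(1+w²)`, the nonlinear ODE
`w' = c (1+w²)^{3/2} - (m-1) coth r · w (1+w²)` holds on `(0,∞)` iff `u` is
differentiable there and satisfies the linear ODE `u' = c - (m-1) coth r · u`. -/
theorem stmt_6 (m : ℕ) (hm : 2 ≤ m) (c : ℝ) (w : ℝ → ℝ)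
    (hw : ∀ r : ℝ, 0 < r → DifferentiableAt ℝ w r)
    (u : ℝ → ℝ) (hu : ∀ r : ℝ, u r = w r / Real.sqrt (1 + w r ^ 2)) :
    (∀ r : ℝ, 0 < r →
        deriv w r = c * (1 + w r ^ 2) ^ ((3:ℝ)/2)
          - ((m : ℝ) - 1) * (Real.cosh r / Real.sinh r) * w r * (1 + w r ^ 2)) ↔
      (∀ r : ℝ, 0 < r →
        HasDerivAt u (c - ((m : ℝ) - 1) * (Real.cosh r / Real.sinh r) * u r) r) :=
  stmt_6_general m c w hw u hu
end

section
/- Let m ≥ 2 be an integer, c a real constant, and w : (0,∞) → ℝ a differentiable function with |w(r)| < 1 for all r > 0. Define u : (0,∞) → ℝ by u(r) = w(r)/√(1 − w(r)²). Then w satisfies w'(r) = c·(1 − w(r)²)^(3/2) − (m−1)·coth(r)·w(r)·(1 − w(r)²) for all r > 0 if and only if u is differentiable and satisfies u'(r) = c − (m−1)·coth(r)·u(r) for all r > 0. -/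
/-!
Write `s = 1 - w²`. Differentiating `u = w / √s` gives `u' = w' / s^{3/2}`, and since
`s^{3/2} = s √s`, multiplying the linear ODE `u' = c - K u` by `s^{3/2}` turns it into
`w' = c s^{3/2} - K w s`, with `K = (m - 1) coth r`. Both directions are therefore a
pointwise rescaling by the positive factor `s^{3/2}`.
-/

open Real

lemma Real.rpow_three_halves_eq_mul_sqrt {s : ℝ} (hs : 0 ≤ s) : s ^ (3 / 2 : ℝ) = s * √s := by
  rw [sqrt_eq_rpow, show (3 / 2 : ℝ) = 1 + 1 / 2 by norm_num, rpow_add' hs (by norm_num),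
    rpow_one]

lemma HasDerivAt.div_sqrt_one_sub_sq {w : ℝ → ℝ} {w' r : ℝ} (hw : HasDerivAt w w' r)
    (hw1 : |w r| < 1) :
    HasDerivAt (fun x => w x / √(1 - w x ^ 2)) (w' / (1 - w r ^ 2) ^ (3 / 2 : ℝ)) r := by
  have hs : 0 < 1 - w r ^ 2 := sub_pos.2 ((sq_lt_one_iff_abs_lt_one _).2 hw1)
  have hsqrt : 0 < √(1 - w r ^ 2) := sqrt_pos.2 hs
  have hs' : HasDerivAt (fun x => 1 - w x ^ 2) (-(2 * w r * w')) r :=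
    ((hasDerivAt_const r 1).sub (hw.pow 2)).congr_deriv (by push_cast; ring)
  refine (hw.div (hs'.sqrt hs.ne') hsqrt.ne').congr_deriv ?_
  rw [rpow_three_halves_eq_mul_sqrt hs.le]
  field_simp
  linear_combination (-(w' * w r ^ 2)) * sq_sqrt hs.le

lemma eq_mul_rpow_three_halves_sub_iff {s : ℝ} (hs : 0 < s) (d c K a : ℝ) :
    d = c * s ^ (3 / 2 : ℝ) - K * a * s ↔ d / s ^ (3 / 2 : ℝ) = c - K * (a / √s) := by
  have hsqrt : 0 < √s := sqrt_pos.2 hs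
  rw [rpow_three_halves_eq_mul_sqrt hs.le, div_eq_iff (by positivity)]
  constructor <;> intro h <;> rw [h] <;> field_simp

theorem stmt_7_general (m : ℕ) (c : ℝ) (w : ℝ → ℝ)
    (hw : ∀ r : ℝ, 0 < r → DifferentiableAt ℝ w r)
    (hw1 : ∀ r : ℝ, 0 < r → |w r| < 1)
    (u : ℝ → ℝ) (hu : ∀ r : ℝ, u r = w r / Real.sqrt (1 - w r ^ 2)) :
    (∀ r : ℝ, 0 < r →
        deriv w r = c * (1 - w r ^ 2) ^ ((3:ℝ)/2)
          - ((m : ℝ) - 1) * (Real.cosh r / Real.sinh r) * w r * (1 - w r ^ 2)) ↔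
      (∀ r : ℝ, 0 < r →
        HasDerivAt u (c - ((m : ℝ) - 1) * (Real.cosh r / Real.sinh r) * u r) r) := by
  refine forall₂_congr fun r hr => ?_
  have hs : 0 < 1 - w r ^ 2 := sub_pos.2 ((sq_lt_one_iff_abs_lt_one _).2 (hw1 r hr))
  have hu' : HasDerivAt u (deriv w r / (1 - w r ^ 2) ^ (3 / 2 : ℝ)) r := by
    simpa only [← funext hu] using (hw r hr).hasDerivAt.div_sqrt_one_sub_sq (hw1 r hr)
  rw [eq_mul_rpow_three_halves_sub_iff hs, hu r]
  exact ⟨fun h => h ▸ hu', hu'.unique⟩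

/-- For `m ≥ 2`, `c ∈ ℝ` and a function `w` differentiable on `(0,∞)` with
`|w| < 1` there, setting `u = w/√(1-w²)`, the nonlinear ODE
`w' = c (1-w²)^{3/2} - (m-1) coth r · w (1-w²)` holds on `(0,∞)` iff `u` is
differentiable there and satisfies the linear ODE `u' = c - (m-1) coth r · u`. -/
theorem stmt_7 (m : ℕ) (hm : 2 ≤ m) (c : ℝ) (w : ℝ → ℝ)
    (hw : ∀ r : ℝ, 0 < r → DifferentiableAt ℝ w r)
    (hw1 : ∀ r : ℝ, 0 < r → |w r| < 1)
    (u : ℝ → ℝ) (hu : ∀ r : ℝ, u r = w r / Real.sqrt (1 - w r ^ 2)) :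
    (∀ r : ℝ, 0 < r →
        deriv w r = c * (1 - w r ^ 2) ^ ((3:ℝ)/2)
          - ((m : ℝ) - 1) * (Real.cosh r / Real.sinh r) * w r * (1 - w r ^ 2)) ↔
      (∀ r : ℝ, 0 < r →
        HasDerivAt u (c - ((m : ℝ) - 1) * (Real.cosh r / Real.sinh r) * u r) r) :=
  stmt_7_general m c w hw hw1 u hu
end

section
/- Let m ≥ 2 be an integer and define A : (0,∞) → ℝ by A(s) = (∫₀^s (sinh t)^(m-1) dt)/(sinh s)^(m-1). Then, as s → 0⁺, A(s) = (s/m)·(1 − ((m−1)/(3(m+2)))·s²) + O(s⁵); that is, the function s ↦ A(s) − (s/m) + ((m−1)/(3m(m+2)))·s³ is O(s⁵) as s → 0⁺. -/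
/-!
`A · sinh^(m-1)` is the primitive of `sinh^(m-1)` vanishing at `0`, so `A` solves
`A' sinh + (m-1) A cosh = sinh`. The cubic `P s = s/m - (m-1)/(3m(m+2)) s³` solves this ODE up to
a residual `R = O(s⁵)`, by the Taylor expansions of `sinh` and `cosh`. Hence
`(A - P) sinh^(m-1) = ∫₀^s sinh^(m-2) R = O(s^(m+4))`, and dividing by `sinh^(m-1) s ≥ s^(m-1)`
gives `A - P = O(s⁵)`.
-/

open Filter Topology Asymptotics Real

lemma exp_neg_sub_sum_range_isBigO_pow (n : ℕ) :
    (fun x => exp (-x) - ∑ i ∈ Finset.range n, (-x) ^ i / i.factorial) =O[𝓝 0] (· ^ n) :=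
  ((exp_sub_sum_range_isBigO_pow n).comp_tendsto (by simpa using tendsto_neg (0 : ℝ))).trans_le
    fun x => by simp

lemma sinh_sub_taylor_isBigO : (fun t => sinh t - (t + t ^ 3 / 6)) =O[𝓝 0] (· ^ 5) :=
  (((exp_sub_sum_range_isBigO_pow 5).sub (exp_neg_sub_sum_range_isBigO_pow 5)).const_mul_left
    (1 / 2)).congr_left fun t => by
      simp only [sinh_eq, Finset.sum_range_succ, Finset.sum_range_zero, Nat.factorial,
        Nat.cast_ofNat, Nat.cast_one, Nat.succ_eq_add_one, Nat.reduceAdd, Nat.reduceMul]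
      ring

lemma cosh_sub_taylor_isBigO : (fun t => cosh t - (1 + t ^ 2 / 2)) =O[𝓝 0] (· ^ 4) :=
  (((exp_sub_sum_range_isBigO_pow 4).add (exp_neg_sub_sum_range_isBigO_pow 4)).const_mul_left
    (1 / 2)).congr_left fun t => by
      simp only [cosh_eq, Finset.sum_range_succ, Finset.sum_range_zero, Nat.factorial,
        Nat.cast_ofNat, Nat.cast_one, Nat.succ_eq_add_one, Nat.reduceAdd, Nat.reduceMul]
      ring

noncomputable def profilePoly (m t : ℝ) : ℝ := t / m - (m - 1) / (3 * m * (m + 2)) * t ^ 3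

lemma hasDerivAt_profilePoly (m t : ℝ) :
    HasDerivAt (profilePoly m) (1 / m - (m - 1) / (m * (m + 2)) * t ^ 2) t :=
  (((hasDerivAt_id t).div_const m).sub
    ((hasDerivAt_pow 3 t).const_mul ((m - 1) / (3 * m * (m + 2))))).congr_deriv
    (by field_simp; ring)

lemma profilePoly_ode_residual_isBigO {m : ℝ} (hm : m ≠ 0) (hm₂ : m + 2 ≠ 0) :
    (fun t => sinh t - ((1 / m - (m - 1) / (m * (m + 2)) * t ^ 2) * sinh t
      + (m - 1) * profilePoly m t * cosh t)) =O[𝓝 0] (· ^ 5) := by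
  have hP : (fun t => profilePoly m t) =O[𝓝 0] fun t => t := by
    simpa [show profilePoly m 0 = 0 by simp [profilePoly]] using
      (hasDerivAt_profilePoly m 0).isBigO_sub
  have hQ : (fun t => (m - 1) / m + (m - 1) / (m * (m + 2)) * t ^ 2) =O[𝓝 0]
      (fun _ => (1 : ℝ)) :=
    (Continuous.tendsto (by fun_prop) 0).isBigO_one ℝ
  have h₁ := isBigO_const_mul_self ((m - 1) / (6 * (m + 2))) (· ^ 5) (𝓝 (0 : ℝ))
  have h₂ := hQ.mul sinh_sub_taylor_isBigO
  have h₃ := (hP.const_mul_left (m - 1)).mul cosh_sub_taylor_isBigO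
  -- `R = (m-1)/(6(m+2)) t⁵ + Q (sinh t - t - t³/6) - (m-1) P (cosh t - 1 - t²/2)`: the cubic
  -- coefficient of `P` is the one that cancels the `t³` terms.
  refine ((h₁.add (by simpa using h₂)).sub (by simpa [← pow_succ'] using h₃)).congr_left
    fun t => ?_
  unfold profilePoly
  field_simp
  ring

lemma integral_sinh_pow_eq {f f' : ℝ → ℝ} (hf : ∀ t, HasDerivAt f (f' t) t)
    (hf' : Continuous f') (n : ℕ) (s : ℝ) :
    ∫ t in 0..s, sinh t ^ (n + 1) = f s * sinh s ^ (n + 1)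
      + ∫ t in 0..s, sinh t ^ n * (sinh t - (f' t * sinh t + (n + 1) * f t * cosh t)) := by
  have hfc : Continuous f := continuous_iff_continuousAt.2 fun t => (hf t).continuousAt
  have hF : ∀ t, HasDerivAt (fun t => f t * sinh t ^ (n + 1))
      (sinh t ^ n * (f' t * sinh t + (n + 1) * f t * cosh t)) t := fun t =>
    ((hf t).mul ((hasDerivAt_sinh t).fun_pow (n + 1))).congr_deriv (by push_cast; ring)
  have hFTC := intervalIntegral.integral_eq_sub_of_hasDerivAt (fun t _ => hF t)
    (Continuous.intervalIntegrable (by fun_prop) 0 s)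
  rw [sinh_zero, zero_pow n.succ_ne_zero, mul_zero, sub_zero] at hFTC
  rw [← hFTC, ← intervalIntegral.integral_add (Continuous.intervalIntegrable (by fun_prop) _ _)
    (Continuous.intervalIntegrable (by fun_prop) _ _)]
  congr with t
  ring

lemma intervalIntegral_isBigO_pow {f : ℝ → ℝ} {k : ℕ} (hf : f =O[𝓝[>] 0] (· ^ k)) :
    (fun s => ∫ t in 0..s, f t) =O[𝓝[>] 0] (· ^ (k + 1)) := by
  obtain ⟨C, hC, hfC⟩ := hf.exists_pos
  obtain ⟨ε, hε, hsub⟩ := mem_nhdsGT_iff_exists_Ioo_subset.1 hfC.bound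
  refine .of_bound C ?_
  filter_upwards [Ioo_mem_nhdsGT hε] with s hs
  have hbound : ‖∫ t in 0..s, f t‖ ≤ ∫ t in 0..s, C * t ^ k := by
    refine intervalIntegral.norm_integral_le_of_norm_le hs.1.le (.of_forall fun t ht => ?_)
      (Continuous.intervalIntegrable (by fun_prop) _ _)
    simpa [abs_of_pos ht.1] using hsub ⟨ht.1, ht.2.trans_lt hs.2⟩
  rw [intervalIntegral.integral_const_mul, integral_pow] at hbound
  refine hbound.trans ?_
  rw [zero_pow k.succ_ne_zero, sub_zero, norm_of_nonneg (pow_nonneg hs.1.le _)]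
  gcongr
  exact div_le_self (pow_nonneg hs.1.le _) (by simp)

lemma isBigO_div_sinh_pow {u : ℝ → ℝ} {k n : ℕ} (hu : u =O[𝓝[>] 0] (· ^ (k + n))) :
    (fun s => u s / sinh s ^ n) =O[𝓝[>] 0] (· ^ k) := by
  obtain ⟨C, hC⟩ := hu.bound
  refine .of_bound C ?_
  filter_upwards [hC, self_mem_nhdsWithin] with s hs (hs₀ : 0 < s)
  have hsinh : s ^ n ≤ sinh s ^ n := pow_le_pow_left₀ hs₀.le (self_le_sinh_iff.2 hs₀.le) n
  rw [norm_div, norm_pow, norm_of_nonneg (sinh_pos_iff.2 hs₀).le]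
  calc ‖u s‖ / sinh s ^ n ≤ ‖u s‖ / s ^ n := by gcongr
    _ ≤ C * ‖s ^ (k + n)‖ / s ^ n := by gcongr
    _ = C * ‖s ^ k‖ := by
      rw [pow_add, norm_mul, norm_of_nonneg (pow_nonneg hs₀.le n)]
      field_simp

/-- For `m ≥ 2` and `A s = (∫₀^s (sinh t)^(m-1) dt)/(sinh s)^(m-1)`, as `s → 0⁺`
one has `A s = (s/m)(1 - ((m-1)/(3(m+2))) s²) + O(s⁵)`, i.e.
`s ↦ A s - s/m + ((m-1)/(3m(m+2))) s³` is `O(s⁵)`. -/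
theorem stmt_12 (m : ℕ) (hm : 2 ≤ m) (A : ℝ → ℝ)
    (hA : ∀ s : ℝ, 0 < s → A s =
      (∫ t in (0:ℝ)..s, Real.sinh t ^ (m - 1)) / Real.sinh s ^ (m - 1)) :
    (fun s : ℝ => A s - s / (m : ℝ) + (((m : ℝ) - 1) / (3 * (m : ℝ) * ((m : ℝ) + 2))) * s ^ 3)
      =O[𝓝[>] (0:ℝ)] fun s : ℝ => s ^ 5 := by
  obtain ⟨k, rfl⟩ : ∃ k, m = k + 2 := ⟨m - 2, by omega⟩
  set M : ℝ := ((k + 2 : ℕ) : ℝ) with hM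
  push_cast at hM
  set R := fun t => sinh t - ((1 / M - (M - 1) / (M * (M + 2)) * t ^ 2) * sinh t
      + (k + 1) * profilePoly M t * cosh t)
  have hR : (fun t => sinh t ^ k * R t) =O[𝓝[>] 0] (· ^ (5 + k)) := by
    have := (isEquivalent_sinh.isBigO.pow k).mul
      (profilePoly_ode_residual_isBigO (m := M) (by positivity) (by positivity))
    refine (this.mono nhdsWithin_le_nhds).congr (fun t => ?_) (fun t => ?_)
    · simp only [R, hM]
      ring
    · rw [id, pow_add, mul_comm]
  have hrepr : ∀ s > 0, A s - s / M + (M - 1) / (3 * M * (M + 2)) * s ^ 3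
      = (∫ t in 0..s, sinh t ^ k * R t) / sinh s ^ (k + 1) := by
    intro s hs
    rw [hA s hs, show k + 2 - 1 = k + 1 by omega,
      integral_sinh_pow_eq (hasDerivAt_profilePoly M) (by fun_prop) k s, add_div,
      mul_div_cancel_right₀ _ (pow_ne_zero _ (sinh_pos_iff.2 hs).ne'), profilePoly]
    ring
  refine (isBigO_div_sinh_pow (k := 5) (n := k + 1) (intervalIntegral_isBigO_pow hR)).congr' ?_ .rfl
  filter_upwards [self_mem_nhdsWithin] with s hs using (hrepr s hs).symm
end

section
/- Let m ≥ 2 be an integer and c any real constant. Define A(s) = (∫₀^s (sinh t)^(m-1) dt)/(sinh s)^(m-1) for s > 0, and F(r) = ∫₀^r c·A(s)/√(1 + c²·A(s)²) ds for r ≥ 0. Then F(r) − (c/m)·(r²/2) = O(r⁴) as r → 0⁺. -/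
/-!
Since `t ≤ sinh t ≤ t cosh s` on `[0, s]`, the numerator and the denominator of `A s` are within a
factor `cosh s ^ (m - 1) = 1 + O(s²)` of `s ^ m / m` and `s ^ (m - 1)`, so `A s = s / m + O(s³)`.
As `w / √(1 + w²) = w + O(w³)`, the integrand of `F` is `(c / m) s + O(s³)`, and integrating it
over `[0, r]` gives the claim.
-/

open Filter Topology Asymptotics Set intervalIntegral

namespace Real

theorem sinh_le_mul_cosh {t : ℝ} (ht : 0 ≤ t) : sinh t ≤ t * cosh t := by
  rcases ht.eq_or_lt with rfl | ht
  · simp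
  obtain ⟨ξ, hξ, hslope⟩ := exists_hasDerivAt_eq_slope sinh cosh ht
    continuous_sinh.continuousOn fun x _ => hasDerivAt_sinh x
  rw [sinh_zero, sub_zero, sub_zero, eq_div_iff ht.ne'] at hslope
  have : cosh ξ ≤ cosh t := cosh_le_cosh.2 <| by
    rw [abs_of_pos hξ.1, abs_of_pos ht]; exact hξ.2.le
  rw [← hslope, mul_comm]
  exact mul_le_mul_of_nonneg_left this ht.le

theorem cosh_pow_sub_one_le {n : ℕ} {s : ℝ} (h : n * s ^ 2 ≤ 2) :
    cosh s ^ n - 1 ≤ n * s ^ 2 := by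
  have hexp : cosh s ^ n ≤ exp (n * s ^ 2 / 2) := by
    calc cosh s ^ n ≤ exp (s ^ 2 / 2) ^ n :=
          pow_le_pow_left₀ (cosh_pos s).le (cosh_le_exp_half_sq s) n
      _ = exp (n * s ^ 2 / 2) := by rw [← exp_nat_mul]; ring_nf
  have hx : |n * s ^ 2 / 2| ≤ 1 := by
    rw [abs_of_nonneg (by positivity)]; linarith
  have := (abs_le.1 (abs_exp_sub_one_le hx)).2
  rw [abs_of_nonneg (by positivity)] at this
  linarith

end Real

theorem abs_integral_div_sub_le_of_pow_le_of_le_mul_pow {f : ℝ → ℝ} {n : ℕ} {s k : ℝ}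
    (hs : 0 < s) (hf : IntervalIntegrable f MeasureTheory.volume 0 s)
    (hlow : ∀ t ∈ Icc 0 s, t ^ n ≤ f t) (hup : ∀ t ∈ Icc 0 s, f t ≤ k * t ^ n) :
    |(∫ t in (0:ℝ)..s, f t) / f s - s / (n + 1)| ≤ s / (n + 1) * (k - 1) := by
  set a := s / (n + 1)
  have hpow : IntervalIntegrable (fun t : ℝ => t ^ n) MeasureTheory.volume 0 s :=
    (continuous_pow n).intervalIntegrable 0 s
  have hint : ∫ t in (0:ℝ)..s, t ^ n = a * s ^ n := by
    rw [integral_pow, zero_pow n.succ_ne_zero, sub_zero, pow_succ]; ring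
  have hsn : 0 < s ^ n := by positivity
  have hs_mem : s ∈ Icc 0 s := right_mem_Icc.2 hs.le
  have hD : 0 < f s := hsn.trans_le (hlow s hs_mem)
  have hk : 1 ≤ k := le_of_mul_le_mul_right (by linarith [hlow s hs_mem, hup s hs_mem]) hsn
  have hN_low : a * s ^ n ≤ ∫ t in (0:ℝ)..s, f t := hint ▸ integral_mono_on hs.le hpow hf hlow
  have hN_up : (∫ t in (0:ℝ)..s, f t) ≤ k * (a * s ^ n) := by
    rw [← hint, ← integral_const_mul]
    exact integral_mono_on hs.le hf (hpow.const_mul k) hup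
  have ha : 0 < a := by positivity
  have hupper : (∫ t in (0:ℝ)..s, f t) / f s ≤ k * a := by
    rw [div_le_iff₀ hD]
    calc _ ≤ k * a * s ^ n := by linarith
      _ ≤ k * a * f s := by gcongr; exact hlow s hs_mem
  have hlower : a / k ≤ (∫ t in (0:ℝ)..s, f t) / f s := by
    rw [div_le_div_iff₀ (by positivity) hD]; nlinarith [hup s hs_mem]
  -- `1 / k ≥ 2 - k` because `(k - 1) ^ 2 ≥ 0`
  have hinv : a * (2 - k) ≤ a / k := by
    rw [le_div_iff₀ (by positivity)]; nlinarith [sq_nonneg (k - 1)]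
  rw [abs_le]; constructor <;> nlinarith

theorem isBigO_integral_sinh_pow_div_sub (n : ℕ) :
    (fun s => (∫ t in (0:ℝ)..s, Real.sinh t ^ n) / Real.sinh s ^ n - s / (n + 1))
      =O[𝓝[>] 0] fun s => s ^ 3 := by
  have hsmall : ∀ᶠ s in 𝓝[>] (0:ℝ), (n:ℝ) * s ^ 2 ≤ 2 := by
    have : Tendsto (fun s : ℝ => (n:ℝ) * s ^ 2) (𝓝 0) (𝓝 0) := by
      simpa using ((continuous_pow 2).const_mul (n:ℝ)).tendsto 0
    exact nhdsWithin_le_nhds (this.eventually (ge_mem_nhds two_pos))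
  refine IsBigO.of_bound n ?_
  filter_upwards [hsmall, self_mem_nhdsWithin] with s hs (hs0 : 0 < s)
  have hlow : ∀ t ∈ Icc 0 s, t ^ n ≤ Real.sinh t ^ n := fun t ht =>
    pow_le_pow_left₀ ht.1 (Real.self_le_sinh_iff.2 ht.1) n
  have hup : ∀ t ∈ Icc 0 s, Real.sinh t ^ n ≤ Real.cosh s ^ n * t ^ n := fun t ht => by
    rw [← mul_pow, mul_comm]
    refine pow_le_pow_left₀ (Real.sinh_nonneg_iff.2 ht.1) ?_ n
    calc Real.sinh t ≤ t * Real.cosh t := Real.sinh_le_mul_cosh ht.1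
      _ ≤ t * Real.cosh s := by
        refine mul_le_mul_of_nonneg_left (Real.cosh_le_cosh.2 ?_) ht.1
        rw [abs_of_nonneg ht.1, abs_of_pos hs0]; exact ht.2
  have hint := (Real.continuous_sinh.pow n).intervalIntegrable (μ := MeasureTheory.volume) 0 s
  rw [Real.norm_eq_abs, Real.norm_eq_abs]
  calc _ ≤ s / (n + 1) * (Real.cosh s ^ n - 1) :=
        abs_integral_div_sub_le_of_pow_le_of_le_mul_pow hs0 hint hlow hup
    _ ≤ s * (n * s ^ 2) :=
        mul_le_mul (div_le_self hs0.le (le_add_of_nonneg_left n.cast_nonneg))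
          (Real.cosh_pow_sub_one_le hs) (sub_nonneg.2 (one_le_pow₀ (Real.one_le_cosh s))) hs0.le
    _ = n * |s ^ 3| := by rw [abs_of_pos (by positivity)]; ring

theorem abs_div_sqrt_one_add_sq_le_one (w : ℝ) : |w / √(1 + w ^ 2)| ≤ 1 := by
  have hpos : 0 < √(1 + w ^ 2) := by positivity
  rw [abs_div, abs_of_pos hpos, div_le_one hpos, ← Real.sqrt_sq_eq_abs]
  exact Real.sqrt_le_sqrt (by linarith)

theorem abs_div_sqrt_one_add_sq_sub_self_le (w : ℝ) : |w / √(1 + w ^ 2) - w| ≤ |w| ^ 3 / 2 := by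
  have h1 : 1 ≤ √(1 + w ^ 2) := Real.one_le_sqrt.2 (by nlinarith)
  have h2 : √(1 + w ^ 2) ≤ 1 + w ^ 2 / 2 :=
    (Real.sqrt_le_left (by positivity)).2 (by nlinarith [sq_nonneg (w ^ 2)])
  have hpos : 0 < √(1 + w ^ 2) := one_pos.trans_le h1
  have hfactor : w / √(1 + w ^ 2) - w = w * ((1 - √(1 + w ^ 2)) / √(1 + w ^ 2)) := by
    field_simp
  have hquot : |(1 - √(1 + w ^ 2)) / √(1 + w ^ 2)| ≤ w ^ 2 / 2 := by
    rw [abs_div, abs_of_pos hpos, abs_of_nonpos (by linarith), div_le_iff₀ hpos]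
    nlinarith
  calc |w / √(1 + w ^ 2) - w| ≤ |w| * (w ^ 2 / 2) := by
        rw [hfactor, abs_mul]; exact mul_le_mul_of_nonneg_left hquot (abs_nonneg w)
    _ = |w| ^ 3 / 2 := by rw [← sq_abs w]; ring

theorem isBigO_mul_div_sqrt_one_add_sq_sub {a : ℝ → ℝ} {c k : ℝ}
    (ha : (fun s => a s - s / k) =O[𝓝[>] 0] fun s => s ^ 3) :
    (fun s => c * a s / √(1 + c ^ 2 * a s ^ 2) - c / k * s) =O[𝓝[>] 0] fun s => s ^ 3 := by
  have hcube : (fun s : ℝ => s ^ 3) =O[𝓝[>] 0] fun s => s :=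
    ((isLittleO_pow_pow (𝕜 := ℝ) (by norm_num : 1 < 3)).isBigO.mono nhdsWithin_le_nhds).congr_right
      (by simp)
  have ha_lin : a =O[𝓝[>] 0] fun s => s := by
    have : (fun s : ℝ => s / k) =O[𝓝[>] 0] fun s => s :=
      isBigO_of_le' (c := |k⁻¹|) _ fun s => by simp [div_eq_mul_inv, mul_comm]
    simpa using (ha.trans hcube).add this
  have hsqrt : (fun s => c * a s / √(1 + (c * a s) ^ 2) - c * a s) =O[𝓝[>] 0]
      fun s => (c * a s) ^ 3 :=
    isBigO_of_le' (c := 1 / 2) _ fun s => by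
      simpa [abs_pow, div_eq_inv_mul, mul_comm] using abs_div_sqrt_one_add_sq_sub_self_le (c * a s)
  have hcube_a : (fun s => (c * a s) ^ 3) =O[𝓝[>] 0] fun s => s ^ 3 :=
    (ha_lin.const_mul_left c).pow 3
  refine ((hsqrt.trans hcube_a).add (ha.const_mul_left c)).congr_left fun s => ?_
  rw [mul_pow]; ring

theorem isBigO_intervalIntegral_of_isBigO_pow {E : Type*} [NormedAddCommGroup E]
    [NormedSpace ℝ E] {f : ℝ → E} {n : ℕ} (hf : f =O[𝓝[>] 0] fun s => s ^ n) :
    (fun r => ∫ s in (0:ℝ)..r, f s) =O[𝓝[>] 0] fun r => r ^ (n + 1) := by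
  obtain ⟨C, hC0, hC⟩ := hf.exists_nonneg
  obtain ⟨ε, hε, hbound⟩ := (nhdsGT_basis (0:ℝ)).eventually_iff.1 hC.bound
  refine IsBigO.of_bound C ?_
  filter_upwards [Ioo_mem_nhdsGT hε] with r ⟨hr0, hrε⟩
  have hle : ∀ s ∈ Ioc 0 r, ‖f s‖ ≤ C * s ^ n := fun s hs => by
    simpa [abs_of_pos hs.1] using hbound ⟨hs.1, hs.2.trans_lt hrε⟩
  calc ‖∫ s in (0:ℝ)..r, f s‖ ≤ ∫ s in (0:ℝ)..r, C * s ^ n :=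
        norm_integral_le_of_norm_le hr0.le (.of_forall hle)
          ((continuous_pow n).intervalIntegrable 0 r |>.const_mul C)
    _ = C * (r ^ (n + 1) / (n + 1)) := by
        rw [integral_const_mul, integral_pow, zero_pow n.succ_ne_zero, sub_zero]
    _ ≤ C * ‖r ^ (n + 1)‖ := by
        rw [Real.norm_eq_abs, abs_of_pos (by positivity)]
        exact mul_le_mul_of_nonneg_left
          (div_le_self (by positivity) (le_add_of_nonneg_left n.cast_nonneg)) hC0

theorem intervalIntegrable_mul_div_sqrt_one_add_sq {A : ℝ → ℝ} (c : ℝ)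
    (hA : ContinuousOn A (Ioi 0)) {r : ℝ} (hr : 0 ≤ r) :
    IntervalIntegrable (fun s => c * A s / √(1 + c ^ 2 * A s ^ 2)) MeasureTheory.volume 0 r := by
  rw [intervalIntegrable_iff_integrableOn_Ioc_of_le hr]
  have hcont : ContinuousOn (fun s => c * A s / √(1 + c ^ 2 * A s ^ 2)) (Ioc 0 r) := by
    have hA' := hA.mono fun _ (hs : _ ∈ Ioc 0 r) => hs.1
    exact (continuousOn_const.mul hA').div
      (Real.continuous_sqrt.comp_continuousOn (continuousOn_const.add
        (continuousOn_const.mul (hA'.pow 2)))) fun s _ => by positivity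
  refine MeasureTheory.IntegrableOn.of_bound measure_Ioc_lt_top
    (hcont.aestronglyMeasurable measurableSet_Ioc) 1 (.of_forall fun s => ?_)
  simpa only [Real.norm_eq_abs, mul_pow] using abs_div_sqrt_one_add_sq_le_one (c * A s)

/-- For `m ≥ 2` and any real `c`, with
`A s = (∫₀^s (sinh t)^(m-1) dt)/(sinh s)^(m-1)` and
`F r = ∫₀^r c A s/√(1 + c²A s²) ds`, one has `F r - (c/m)(r²/2) = O(r⁴)` as `r → 0⁺`. -/
theorem stmt_14 (m : ℕ) (hm : 2 ≤ m) (c : ℝ)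
    (A : ℝ → ℝ)
    (hA : ∀ s : ℝ, 0 < s → A s =
      (∫ t in (0:ℝ)..s, Real.sinh t ^ (m - 1)) / Real.sinh s ^ (m - 1))
    (F : ℝ → ℝ)
    (hF : ∀ r : ℝ, 0 ≤ r →
      F r = ∫ s in (0:ℝ)..r, c * A s / Real.sqrt (1 + c ^ 2 * A s ^ 2)) :
    (fun r : ℝ => F r - (c / (m : ℝ)) * (r ^ 2 / 2)) =O[𝓝[>] (0:ℝ)] fun r : ℝ => r ^ 4 := by
  obtain ⟨n, rfl⟩ : ∃ n, m = n + 1 := ⟨m - 1, by omega⟩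
  rw [Nat.add_sub_cancel] at hA
  have hA_cont : ContinuousOn A (Ioi 0) := by
    refine ContinuousOn.congr ?_ fun s hs => hA s hs
    exact (continuous_primitive (fun a b => (Real.continuous_sinh.pow n).intervalIntegrable a b)
      0).continuousOn.div (Real.continuous_sinh.pow n).continuousOn
      fun s hs => pow_ne_zero n (Real.sinh_pos_iff.2 hs).ne'
  have hA_asymp : (fun s => A s - s / (n + 1)) =O[𝓝[>] 0] fun s => s ^ 3 :=
    (isBigO_integral_sinh_pow_div_sub n).congr'
      (eventually_mem_nhdsWithin.mono fun s hs => by simp only [hA s hs]) EventuallyEq.rfl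
  refine (isBigO_intervalIntegral_of_isBigO_pow
    (isBigO_mul_div_sqrt_one_add_sq_sub (c := c) hA_asymp)).congr' ?_ EventuallyEq.rfl
  filter_upwards [self_mem_nhdsWithin] with r (hr : 0 < r)
  rw [integral_sub (intervalIntegrable_mul_div_sqrt_one_add_sq c hA_cont hr.le)
    ((continuous_const_mul (c / (n + 1))).intervalIntegrable 0 r), hF r hr.le,
    integral_const_mul, integral_id]
  push_cast
  ring
end

section
/- Let m ≥ 2 be an integer and c a real constant with |c| ≤ m−1. Define A(s) = (∫₀^s (sinh t)^(m-1) dt)/(sinh s)^(m-1) for s > 0 and A(0) = 0, and define f : B^m → ℝ on the open unit ball B^m ⊂ ℝ^m by f(x) = ∫₀^{r(x)} c·A(s)/√(1 − c²·A(s)²) ds, where r(x) = log((1 + ‖x‖)/(1 − ‖x‖)). Then f is a C^∞ (infinitely differentiable) function on B^m. -/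
/-!
Write `τ = ‖x‖`, so that `r(x) = 2 artanh τ` and `sinh (2 artanh σ) = 2σ/(1-σ²)`.
Substituting `t = 2 artanh σ` and then `σ = τρ` gives `∫₀^r sinhᵐ⁻¹ = 2ᵐ τᵐ J(τ²)` with
`J(u) = ∫₀¹ ρᵐ⁻¹ (1-uρ²)⁻ᵐ dρ` (`momentIntegral`), which is smooth for `u < 1` by
differentiating under the integral sign; hence `A(2 artanh τ) = τ ψ(τ²)` with `ψ` smooth
(`sinhRatioProfile`). The same substitution followed by `u = σ²` turns `f x` into `Ξ(‖x‖²)`,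
where `Ξ(v) = ∫₀^v c ψ(u) / ((1-u) √(1 - c²uψ(u)²)) du` (`graphProfile`). The square root
stays away from `0` because `(m-1) ∫₀^s sinhᵐ⁻¹ < sinhᵐ⁻¹ s` (integrate
`(m-1) sinhᵐ⁻¹ < (m-1) sinhᵐ⁻² cosh`), so `Ξ`, and with it `f`, is smooth.
-/

open Real Set intervalIntegral MeasureTheory
open scoped ContDiff

noncomputable section

def momentIntegral (p q : ℕ) (u : ℝ) : ℝ :=
  ∫ ρ in (0:ℝ)..1, ρ ^ p / (1 - u * ρ ^ 2) ^ q

theorem hasDerivAt_pow_div_one_sub_mul_sq_pow (p q : ℕ) {ρ x : ℝ} (hx : 1 - x * ρ ^ 2 ≠ 0) :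
    HasDerivAt (fun y => ρ ^ p / (1 - y * ρ ^ 2) ^ q)
      (q * (ρ ^ (p + 2) / (1 - x * ρ ^ 2) ^ (q + 1))) x := by
  have hlin : HasDerivAt (fun y => 1 - y * ρ ^ 2) (-ρ ^ 2) x := by
    simpa using ((hasDerivAt_id x).mul_const (ρ ^ 2)).const_sub 1
  refine ((hasDerivAt_const x (ρ ^ p)).fun_div (hlin.fun_pow q) (pow_ne_zero q hx)).congr_deriv ?_
  rcases q with _ | q
  · simp
  · rw [Nat.add_sub_cancel]
    field_simp
    ring

theorem hasDerivAt_momentIntegral (p q : ℕ) {u : ℝ} (hu : u < 1) :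
    HasDerivAt (momentIntegral p q) (q * momentIntegral (p + 2) (q + 1) u) u := by
  set a := (1 + max u 0) / 2
  have ha1 : a < 1 := by have := max_lt hu one_pos; simp only [a]; linarith
  have hua : u < a := by have := le_max_left u 0; simp only [a]; linarith
  have hden : ∀ x ∈ Iio a, ∀ ρ : ℝ, ρ ^ 2 ≤ 1 → 1 - a ≤ 1 - x * ρ ^ 2 := by
    intro x hx ρ hρ
    have : 0 ≤ a := by positivity
    rcases le_total x 0 with h | h <;> nlinarith [sq_nonneg ρ, mem_Iio.mp hx]
  have hcont : ContinuousOn (fun ρ : ℝ => ρ ^ p / (1 - u * ρ ^ 2) ^ q) (uIcc 0 1) := by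
    refine ContinuousOn.div (by fun_prop) (by fun_prop) fun ρ hρ => ?_
    rw [uIcc_of_le zero_le_one] at hρ
    have := hden u hua ρ (by nlinarith [hρ.1, hρ.2])
    exact pow_ne_zero _ (by linarith)
  have hbound : ∀ ρ ∈ uIoc (0:ℝ) 1, ∀ x ∈ Iio a,
      ‖(q : ℝ) * (ρ ^ (p + 2) / (1 - x * ρ ^ 2) ^ (q + 1))‖ ≤ q * (1 / (1 - a) ^ (q + 1)) := by
    intro ρ hρ x hx
    rw [uIoc_of_le zero_le_one] at hρ
    have hD := hden x hx ρ (by nlinarith [hρ.1, hρ.2])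
    have hDpos : 0 < 1 - x * ρ ^ 2 := by linarith
    have hρ1 : ρ ^ (p + 2) ≤ 1 := pow_le_one₀ hρ.1.le hρ.2
    rw [Real.norm_of_nonneg (by have := hρ.1; positivity)]
    gcongr
  have hdiff : ∀ ρ ∈ uIoc (0:ℝ) 1, ∀ x ∈ Iio a, HasDerivAt (fun y => ρ ^ p / (1 - y * ρ ^ 2) ^ q)
      ((q : ℝ) * (ρ ^ (p + 2) / (1 - x * ρ ^ 2) ^ (q + 1))) x := by
    intro ρ hρ x hx
    rw [uIoc_of_le zero_le_one] at hρ
    have hD := hden x hx ρ (by nlinarith [hρ.1, hρ.2])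
    exact hasDerivAt_pow_div_one_sub_mul_sq_pow p q (by linarith)
  have key := hasDerivAt_integral_of_dominated_loc_of_deriv_le (μ := volume) (Iio_mem_nhds hua)
    (.of_forall fun x => (by fun_prop : Measurable _).aestronglyMeasurable)
    hcont.intervalIntegrable (by fun_prop : Measurable _).aestronglyMeasurable
    (.of_forall hbound) intervalIntegrable_const (.of_forall hdiff)
  rw [intervalIntegral.integral_const_mul] at key
  exact key.2

theorem contDiffOn_momentIntegral (p q : ℕ) : ContDiffOn ℝ ∞ (momentIntegral p q) (Iio 1) := by
  suffices h : ∀ k : ℕ, ∀ p q, ContDiffOn ℝ k (momentIntegral p q) (Iio 1) from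
    contDiffOn_infty.mpr fun k => h k p q
  intro k
  induction k with
  | zero =>
    exact fun p q => contDiffOn_zero.mpr fun u hu =>
      (hasDerivAt_momentIntegral p q hu).continuousAt.continuousWithinAt
  | succ k ih =>
    intro p q
    rw [Nat.cast_succ, contDiffOn_succ_iff_deriv_of_isOpen isOpen_Iio]
    refine ⟨fun u hu => (hasDerivAt_momentIntegral p q hu).differentiableAt.differentiableWithinAt,
      by simp, ?_⟩
    exact (contDiffOn_const.mul (ih (p + 2) (q + 1))).congr fun u hu =>
      (hasDerivAt_momentIntegral p q hu).deriv

theorem Real.hasDerivAt_artanh {x : ℝ} (hx : x ∈ Ioo (-1) 1) :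
    HasDerivAt artanh (1 - x ^ 2)⁻¹ x := by
  have h₁ : 0 < 1 + x := by linarith [hx.1]
  have h₂ : 0 < 1 - x := by linarith [hx.2]
  have hlog : HasDerivAt (fun y => 2⁻¹ * (log (1 + y) - log (1 - y)))
      (2⁻¹ * ((1 + x)⁻¹ - -1 / (1 - x))) x := by
    have ha := ((hasDerivAt_id x).const_add 1).log h₁.ne'
    have hb := ((hasDerivAt_id x).const_sub 1).log h₂.ne'
    simpa using (ha.sub hb).const_mul 2⁻¹
  refine (hlog.congr_of_eventuallyEq ?_).congr_deriv ?_
  · filter_upwards [Ioo_mem_nhds hx.1 hx.2] with y hy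
    rw [artanh_eq_half_log (Ioo_subset_Icc_self hy),
      log_div (by linarith [hy.1]) (by linarith [hy.2]), one_div]
  · rw [show 1 - x ^ 2 = (1 + x) * (1 - x) by ring]
    field_simp
    ring

theorem Real.sinh_two_mul_artanh {x : ℝ} (hx : x ∈ Ioo (-1) 1) :
    sinh (2 * artanh x) = 2 * x / (1 - x ^ 2) := by
  have h : 0 < 1 - x ^ 2 := by nlinarith [hx.1, hx.2]
  rw [sinh_two_mul, sinh_artanh hx, cosh_artanh hx]
  field_simp
  rw [sq_sqrt h.le]

theorem Real.log_div_eq_two_mul_artanh {x : ℝ} (hx : x ∈ Icc (-1) 1) :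
    log ((1 + x) / (1 - x)) = 2 * artanh x := by
  rw [artanh_eq_half_log hx]
  ring

theorem integral_comp_two_mul_artanh (g : ℝ → ℝ) {τ : ℝ} (hτ : τ ∈ Ioo (-1) 1) :
    ∫ s in (0:ℝ)..2 * artanh τ, g s = ∫ σ in (0:ℝ)..τ, g (2 * artanh σ) * (2 / (1 - σ ^ 2)) := by
  have hsub : uIcc 0 τ ⊆ Ioo (-1) 1 := ordConnected_Ioo.uIcc_subset (by norm_num) hτ
  have hderiv : ∀ σ ∈ uIcc 0 τ, HasDerivAt (fun σ => 2 * artanh σ) (2 / (1 - σ ^ 2)) σ :=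
    fun σ hσ => by simpa [div_eq_mul_inv] using (hasDerivAt_artanh (hsub hσ)).const_mul 2
  have := integral_comp_mul_deriv_of_deriv_nonneg (g := g)
    (fun σ hσ => (hderiv σ hσ).continuousAt.continuousWithinAt)
    (fun σ hσ => hderiv σ (Ioo_subset_Icc_self hσ))
    (fun σ hσ => by
      have := hsub (Ioo_subset_Icc_self hσ)
      have : 0 < 1 - σ ^ 2 := by nlinarith [this.1, this.2]
      positivity)
  simpa using this.symm

theorem integral_sinh_pow_two_mul_artanh (n : ℕ) {τ : ℝ} (hτ : τ ∈ Ioo (-1) 1) :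
    ∫ t in (0:ℝ)..2 * artanh τ, sinh t ^ n
      = 2 ^ (n + 1) * τ ^ (n + 1) * momentIntegral n (n + 1) (τ ^ 2) := by
  have hsub : uIcc 0 τ ⊆ Ioo (-1) 1 := ordConnected_Ioo.uIcc_subset (by norm_num) hτ
  rw [integral_comp_two_mul_artanh _ hτ]
  calc ∫ σ in (0:ℝ)..τ, sinh (2 * artanh σ) ^ n * (2 / (1 - σ ^ 2))
      = ∫ σ in (0:ℝ)..τ, 2 ^ (n + 1) * (σ ^ n / (1 - σ ^ 2) ^ (n + 1)) :=
        integral_congr fun σ hσ => by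
          rw [sinh_two_mul_artanh (hsub hσ), div_pow, mul_pow, div_mul_div_comm, ← pow_succ]
          ring
    _ = τ * ∫ ρ in (0:ℝ)..1, 2 ^ (n + 1) * ((τ * ρ) ^ n / (1 - (τ * ρ) ^ 2) ^ (n + 1)) := by
        rw [← smul_eq_mul, smul_integral_comp_mul_left
          (fun σ => 2 ^ (n + 1) * (σ ^ n / (1 - σ ^ 2) ^ (n + 1))), mul_zero, mul_one]
    _ = _ := by
        rw [momentIntegral, ← intervalIntegral.integral_const_mul,
          ← intervalIntegral.integral_const_mul]
        congr 1 with ρ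
        simp only [mul_pow]
        ring

def sinhRatio (n : ℕ) (s : ℝ) : ℝ := (∫ t in (0:ℝ)..s, sinh t ^ n) / sinh s ^ n

def sinhRatioProfile (n : ℕ) (u : ℝ) : ℝ := 2 * (1 - u) ^ n * momentIntegral n (n + 1) u

theorem sinhRatio_two_mul_artanh (n : ℕ) {τ : ℝ} (hτ : τ ∈ Ioo (-1) 1) :
    sinhRatio n (2 * artanh τ) = τ * sinhRatioProfile n (τ ^ 2) := by
  rcases eq_or_ne τ 0 with rfl | hτ0
  · simp [sinhRatio]
  have h : 1 - τ ^ 2 ≠ 0 := by nlinarith [hτ.1, hτ.2]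
  rw [sinhRatio, integral_sinh_pow_two_mul_artanh n hτ, sinh_two_mul_artanh hτ, sinhRatioProfile,
    div_pow, div_div_eq_mul_div, mul_pow]
  field_simp
  ring

theorem sinhRatio_nonneg (n : ℕ) {s : ℝ} (hs : 0 ≤ s) : 0 ≤ sinhRatio n s :=
  div_nonneg (integral_nonneg hs fun _ ht => pow_nonneg (sinh_nonneg_iff.mpr ht.1) n)
    (pow_nonneg (sinh_nonneg_iff.mpr hs) n)

theorem natCast_mul_integral_sinh_pow_lt (n : ℕ) {s : ℝ} (hs : 0 < s) :
    n * ∫ t in (0:ℝ)..s, sinh t ^ n < sinh s ^ n := by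
  rcases n with _ | k
  · simp
  have hFTC : ∫ t in (0:ℝ)..s, (k + 1 : ℝ) * (sinh t ^ k * cosh t) = sinh s ^ (k + 1) := by
    rw [integral_eq_sub_of_hasDerivAt (f := fun t => sinh t ^ (k + 1))
      (fun t _ => by simpa [mul_assoc] using (hasDerivAt_sinh t).fun_pow (k + 1))
      (Continuous.intervalIntegrable (by fun_prop) _ _)]
    simp
  rw [← hFTC, ← intervalIntegral.integral_const_mul, Nat.cast_succ]
  refine integral_lt_integral_of_continuousOn_of_le_of_exists_lt hs (by fun_prop) (by fun_prop)
    (fun t ht => ?_) ⟨s, right_mem_Icc.mpr hs.le, ?_⟩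
  · have := sinh_nonneg_iff.mpr ht.1.le
    rw [pow_succ]
    gcongr
    exact (sinh_lt_cosh t).le
  · have := sinh_pos_iff.mpr hs
    rw [pow_succ]
    gcongr
    exact sinh_lt_cosh s

theorem natCast_mul_sinhRatio_lt_one (n : ℕ) {s : ℝ} (hs : 0 < s) : n * sinhRatio n s < 1 := by
  rw [sinhRatio, ← mul_div_assoc, div_lt_one (pow_pos (sinh_pos_iff.mpr hs) n)]
  exact natCast_mul_integral_sinh_pow_lt n hs

theorem one_sub_sq_mul_mul_sinhRatioProfile_sq_pos {n : ℕ} {c : ℝ} (hc : |c| ≤ n) {u : ℝ}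
    (hu : u < 1) : 0 < 1 - c ^ 2 * u * sinhRatioProfile n u ^ 2 := by
  rw [sub_pos]
  rcases le_or_gt u 0 with hu0 | hu0
  · have := mul_nonpos_of_nonpos_of_nonneg (mul_nonpos_of_nonneg_of_nonpos (sq_nonneg c) hu0)
      (sq_nonneg (sinhRatioProfile n u))
    linarith
  obtain ⟨τ, hτ0, rfl⟩ : ∃ τ, 0 < τ ∧ τ ^ 2 = u := ⟨√u, sqrt_pos.mpr hu0, sq_sqrt hu0.le⟩
  have hτ1 : τ < 1 := by nlinarith
  have hr : 0 < 2 * artanh τ := by linarith [artanh_pos ⟨hτ0, hτ1⟩]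
  have hA := sinhRatio_two_mul_artanh n ⟨by linarith, hτ1⟩
  have hA0 : 0 ≤ τ * sinhRatioProfile n (τ ^ 2) := hA ▸ sinhRatio_nonneg n hr.le
  have hA1 : n * (τ * sinhRatioProfile n (τ ^ 2)) < 1 := hA ▸ natCast_mul_sinhRatio_lt_one n hr
  have hc2 : c ^ 2 ≤ (n : ℝ) ^ 2 := by
    simpa using pow_le_pow_left₀ (abs_nonneg c) hc 2
  calc c ^ 2 * τ ^ 2 * sinhRatioProfile n (τ ^ 2) ^ 2
      = c ^ 2 * (τ * sinhRatioProfile n (τ ^ 2)) ^ 2 := by ring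
    _ ≤ (n * (τ * sinhRatioProfile n (τ ^ 2))) ^ 2 := by
      rw [mul_pow (n : ℝ)]
      exact mul_le_mul_of_nonneg_right hc2 (sq_nonneg _)
    _ < 1 := pow_lt_one₀ (by positivity) hA1 two_ne_zero

def slopeDensity (n : ℕ) (c u : ℝ) : ℝ :=
  c * sinhRatioProfile n u / ((1 - u) * √(1 - c ^ 2 * u * sinhRatioProfile n u ^ 2))

def graphProfile (n : ℕ) (c v : ℝ) : ℝ := ∫ u in (0:ℝ)..v, slopeDensity n c u

theorem contDiffOn_sinhRatioProfile (n : ℕ) : ContDiffOn ℝ ∞ (sinhRatioProfile n) (Iio 1) :=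
  (contDiffOn_const.mul ((contDiffOn_const.sub contDiffOn_id).pow n)).mul
    (contDiffOn_momentIntegral n (n + 1))

theorem contDiffOn_slopeDensity {n : ℕ} {c : ℝ} (hc : |c| ≤ n) :
    ContDiffOn ℝ ∞ (slopeDensity n c) (Iio 1) := by
  have hψ := contDiffOn_sinhRatioProfile n
  have hP := fun u (hu : u ∈ Iio (1:ℝ)) => one_sub_sq_mul_mul_sinhRatioProfile_sq_pos hc hu
  refine (contDiffOn_const.mul hψ).div ((contDiffOn_const.sub contDiffOn_id).mul
    ((contDiffOn_const.sub ((contDiffOn_const.mul contDiffOn_id).mul (hψ.pow 2))).sqrt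
      fun u hu => (hP u hu).ne')) fun u hu => ?_
  exact mul_ne_zero (sub_ne_zero.mpr (mem_Iio.mp hu).ne') (sqrt_ne_zero'.mpr (hP u hu))

theorem ContDiffOn.integral_Iio {g : ℝ → ℝ} {a b : ℝ} (ha : a < b)
    (hg : ContDiffOn ℝ ∞ g (Iio b)) : ContDiffOn ℝ ∞ (fun v => ∫ u in a..v, g u) (Iio b) := by
  have hderiv : ∀ v ∈ Iio b, HasDerivAt (fun v => ∫ u in a..v, g u) (g v) v := fun v hv =>
    integral_hasDerivAt_right
      (hg.continuousOn.mono (ordConnected_Iio.uIcc_subset ha hv)).intervalIntegrable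
      (hg.continuousOn.stronglyMeasurableAtFilter isOpen_Iio v hv)
      (hg.continuousOn.continuousAt (Iio_mem_nhds hv))
  exact (contDiffOn_infty_iff_deriv_of_isOpen isOpen_Iio).mpr
    ⟨fun v hv => (hderiv v hv).differentiableAt.differentiableWithinAt,
      hg.congr fun v hv => (hderiv v hv).deriv⟩

theorem contDiffOn_graphProfile {n : ℕ} {c : ℝ} (hc : |c| ≤ n) :
    ContDiffOn ℝ ∞ (graphProfile n c) (Iio 1) :=
  (contDiffOn_slopeDensity hc).integral_Iio one_pos

theorem integral_two_mul_artanh_eq_graphProfile (n : ℕ) (c : ℝ) {τ : ℝ} (h0 : 0 ≤ τ) (h1 : τ < 1) :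
    ∫ s in (0:ℝ)..2 * artanh τ, c * sinhRatio n s / √(1 - c ^ 2 * sinhRatio n s ^ 2)
      = graphProfile n c (τ ^ 2) := by
  have hτ : τ ∈ Ioo (-1) 1 := ⟨by linarith, h1⟩
  have hsub : uIcc 0 τ ⊆ Ioo (-1) 1 := ordConnected_Ioo.uIcc_subset (by norm_num) hτ
  rw [integral_comp_two_mul_artanh _ hτ]
  calc _ = ∫ σ in (0:ℝ)..τ, slopeDensity n c (σ ^ 2) * (2 * σ) :=
        integral_congr fun σ hσ => by
          rw [sinhRatio_two_mul_artanh n (hsub hσ), slopeDensity,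
            show c ^ 2 * (σ * sinhRatioProfile n (σ ^ 2)) ^ 2
              = c ^ 2 * σ ^ 2 * sinhRatioProfile n (σ ^ 2) ^ 2 by ring,
            div_mul_div_comm, div_mul_eq_mul_div, mul_comm (1 - σ ^ 2)]
          ring
    _ = ∫ u in (0:ℝ) ^ 2..τ ^ 2, slopeDensity n c u :=
        integral_comp_mul_deriv_of_deriv_nonneg (f := fun σ => σ ^ 2) (g := slopeDensity n c)
          (by fun_prop)
          (fun σ _ => by simpa using hasDerivAt_pow 2 σ)
          (fun σ hσ => by linarith [le_min le_rfl h0, hσ.1])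
    _ = graphProfile n c (τ ^ 2) := by rw [graphProfile, zero_pow two_ne_zero]

end

theorem stmt_15_general (m : ℕ) (c : ℝ) (hc : |c| ≤ (m : ℝ) - 1)
    (A : ℝ → ℝ) (hA0 : A 0 = 0)
    (hA : ∀ s : ℝ, 0 < s → A s =
      (∫ t in (0:ℝ)..s, Real.sinh t ^ (m - 1)) / Real.sinh s ^ (m - 1))
    (f : EuclideanSpace ℝ (Fin m) → ℝ)
    (hf : ∀ x : EuclideanSpace ℝ (Fin m), ‖x‖ < 1 →
      f x = ∫ s in (0:ℝ)..(Real.log ((1 + ‖x‖) / (1 - ‖x‖))),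
        c * A s / Real.sqrt (1 - c ^ 2 * A s ^ 2)) :
    ContDiffOn ℝ (⊤ : ℕ∞) f (Metric.ball 0 1) := by
  obtain ⟨n, rfl⟩ : ∃ n, m = n + 1 :=
    Nat.exists_eq_add_one.mpr (by exact_mod_cast (by linarith [abs_nonneg c] : (0:ℝ) < m))
  have hcn : |c| ≤ n := by push_cast at hc; linarith
  have hAn : ∀ s, 0 ≤ s → A s = sinhRatio n s := fun s hs => by
    rcases hs.eq_or_lt with rfl | hs
    · simp [hA0, sinhRatio]
    · simpa [sinhRatio] using hA s hs
  have hsq : MapsTo (fun x : EuclideanSpace ℝ (Fin (n + 1)) => ‖x‖ ^ 2) (Metric.ball 0 1) (Iio 1) :=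
    fun x hx => by simpa using pow_lt_one₀ (norm_nonneg x) (mem_ball_zero_iff.mp hx) two_ne_zero
  refine ((contDiffOn_graphProfile hcn).comp (contDiff_norm_sq ℝ).contDiffOn hsq).congr
    fun x hx => ?_
  have hx1 : ‖x‖ < 1 := mem_ball_zero_iff.mp hx
  have hr : 0 ≤ 2 * artanh ‖x‖ := by linarith [artanh_nonneg (norm_nonneg x)]
  rw [Function.comp_apply, hf x hx1,
    log_div_eq_two_mul_artanh ⟨by linarith [norm_nonneg x], hx1.le⟩,
    ← integral_two_mul_artanh_eq_graphProfile n c (norm_nonneg x) hx1]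
  refine integral_congr fun s hs => ?_
  rw [uIcc_of_le hr] at hs
  simp only [hAn s hs.1]

/-- For `m ≥ 2` and `|c| ≤ m-1`, the function
`f x = ∫₀^{r(x)} c A s/√(1 - c²A s²) ds`, where
`A s = (∫₀^s (sinh t)^(m-1) dt)/(sinh s)^(m-1)` (with `A 0 = 0`) and
`r(x) = log((1+‖x‖)/(1-‖x‖))`, is `C^∞` on the open unit ball of `ℝ^m`. -/
theorem stmt_15 (m : ℕ) (hm : 2 ≤ m) (c : ℝ) (hc : |c| ≤ (m : ℝ) - 1)
    (A : ℝ → ℝ) (hA0 : A 0 = 0)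
    (hA : ∀ s : ℝ, 0 < s → A s =
      (∫ t in (0:ℝ)..s, Real.sinh t ^ (m - 1)) / Real.sinh s ^ (m - 1))
    (f : EuclideanSpace ℝ (Fin m) → ℝ)
    (hf : ∀ x : EuclideanSpace ℝ (Fin m), ‖x‖ < 1 →
      f x = ∫ s in (0:ℝ)..(Real.log ((1 + ‖x‖) / (1 - ‖x‖))),
        c * A s / Real.sqrt (1 - c ^ 2 * A s ^ 2)) :
    ContDiffOn ℝ (⊤ : ℕ∞) f (Metric.ball 0 1) :=
  stmt_15_general m c hc A hA0 hA f hf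
end
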